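/- Let n ≥ 1 and let u : ℂ → ℂⁿ be twice continuously differentiable on all of ℂ (regarding ℂ ≅ ℝ², with ∂₁, ∂₂ the partial derivatives in the real and imaginary coordinate directions). Assume u is doubly periodic: there are ℝ-linearly independent ω₁, ω₂ ∈ ℂ with u(w + ω₁) = u(w) and u(w + ω₂) = u(w) for all w ∈ ℂ. Assume also on all of ℂ: isotropy ⟨J ∂₁u, ∂₂u⟩ = 0 and Hamiltonian stationarity ⟨J u, ∂₁∂₁u + ∂₂∂₂u⟩ = 0. Then either ⟨J u, ∂₁u⟩ and ⟨J u, ∂₂u⟩ vanish identically on ℂ, or there is no point w ∈ ℂ at which ⟨J u(w), ∂₁u(w)⟩ = 0 and ⟨J u(w), ∂₂u(w)⟩ = 0 simultaneously. -/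

import Mathlib

/-- The standard complex structure `J x = i • x` on `ℂⁿ`. -/
noncomputable def Jc {n : ℕ} (x : EuclideanSpace ℂ (Fin n)) : EuclideanSpace ℂ (Fin n) :=
  Complex.I • x

/-- The real inner product `⟨x, y⟩ = Re ⟪x, y⟫` on `ℂⁿ`. -/
noncomputable def rinner {n : ℕ} (x y : EuclideanSpace ℂ (Fin n)) : ℝ :=
  (inner ℂ x y : ℂ).re

/-- Partial derivative in the real coordinate direction for a map on `ℂ ≅ ℝ²`. -/
noncomputable def pd1 {E : Type*} [NormedAddCommGroup E] [NormedSpace ℝ E]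
    (f : ℂ → E) (w : ℂ) : E :=
  fderiv ℝ f w 1

/-- Partial derivative in the imaginary coordinate direction for a map on `ℂ ≅ ℝ²`. -/
noncomputable def pd2 {E : Type*} [NormedAddCommGroup E] [NormedSpace ℝ E]
    (f : ℂ → E) (w : ℂ) : E :=
  fderiv ℝ f w Complex.I

/-!
Write `α dx + β dy` for the pullback `⟨J u, du⟩` of the Liouville form. The function `α - iβ` is
holomorphic: its first Cauchy–Riemann equation `∂₁α + ∂₂β = ⟨J u, Δu⟩ = 0` is Hamiltonian
stationarity, and its second `∂₂α = ∂₁β` follows from isotropy `⟨J ∂₁u, ∂₂u⟩ = 0` and the symmetry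
of the Hessian. It is doubly periodic, hence bounded and constant by Liouville's theorem, so it
either vanishes everywhere or nowhere; its zeros are exactly the Legendrian points.
-/

open Function Set Complex

theorem Function.Periodic.of_mem_span_int {V X ι : Type*} [AddCommGroup V] {b : ι → V}
    {f : V → X} (hf : ∀ i, Periodic f (b i)) {v : V} (hv : v ∈ Submodule.span ℤ (range b)) :
    Periodic f v := by
  induction hv using Submodule.span_induction with
  | mem v hv => obtain ⟨i, rfl⟩ := hv; exact hf i
  | zero => exact fun x => by rw [add_zero]
  | add v w _ _ hv hw => exact hv.add_period hw
  | smul k v _ hv => exact hv.zsmul k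

theorem Continuous.isCompact_range_of_periodic {V X ι : Type*} [NormedAddCommGroup V]
    [NormedSpace ℝ V] [FiniteDimensional ℝ V] [TopologicalSpace X] [Fintype ι]
    (b : Module.Basis ι ℝ V) {f : V → X} (hf : Continuous f) (hper : ∀ i, Periodic f (b i)) :
    IsCompact (range f) := by
  have hK : IsCompact (closure (ZSpan.fundamentalDomain b)) :=
    (ZSpan.fundamentalDomain_isBounded b).isCompact_closure
  suffices range f ⊆ f '' closure (ZSpan.fundamentalDomain b) by
    rw [this.antisymm (image_subset_range _ _)]
    exact hK.image hf
  rintro _ ⟨z, rfl⟩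
  refine ⟨ZSpan.fract b z, subset_closure (ZSpan.fract_mem_fundamentalDomain b z), ?_⟩
  rw [ZSpan.fract_apply, sub_eq_add_neg]
  exact Periodic.of_mem_span_int hper (neg_mem (ZSpan.floor b z).2) z

theorem Differentiable.apply_eq_apply_of_periodic {E : Type*} [NormedAddCommGroup E]
    [NormedSpace ℂ E] {f : ℂ → E} (hf : Differentiable ℂ f) {ω₁ ω₂ : ℂ}
    (hind : LinearIndependent ℝ ![ω₁, ω₂]) (h₁ : Periodic f ω₁) (h₂ : Periodic f ω₂) (z w : ℂ) :
    f z = f w := by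
  let b : Module.Basis (Fin 2) ℝ ℂ :=
    basisOfLinearIndependentOfCardEqFinrank hind (by simp [Complex.finrank_real_complex])
  have hper : ∀ i, Periodic f (b i) := by
    simp only [b, coe_basisOfLinearIndependentOfCardEqFinrank, Fin.forall_fin_two]
    exact ⟨h₁, h₂⟩
  exact hf.apply_eq_apply_of_bounded
    (hf.continuous.isCompact_range_of_periodic b hper).isBounded z w

theorem differentiableAt_complex_of_cauchyRiemann {α β : ℂ → ℝ} {w : ℂ}
    (hα : DifferentiableAt ℝ α w) (hβ : DifferentiableAt ℝ β w)
    (h₁ : fderiv ℝ α w 1 + fderiv ℝ β w I = 0) (h₂ : fderiv ℝ α w I = fderiv ℝ β w 1) :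
    DifferentiableAt ℂ (fun z => (α z : ℂ) - β z * I) w := by
  have hd : HasFDerivAt (fun z => (α z : ℂ) - β z * I)
      (ofRealCLM.comp (fderiv ℝ α w) - (ofRealCLM.comp (fderiv ℝ β w)).smulRight I) w :=
    (ofRealCLM.hasFDerivAt.comp w hα.hasFDerivAt).sub
      ((ofRealCLM.hasFDerivAt.comp w hβ.hasFDerivAt).smul_const I)
  refine differentiableAt_complex_iff_differentiableAt_real.2 ⟨hd.differentiableAt, ?_⟩
  rw [hd.fderiv]
  apply Complex.ext <;> simp <;> linarith

section Calculus

variable {F E : Type*} [NormedAddCommGroup F] [NormedSpace ℝ F] [NormedAddCommGroup E]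
  [NormedSpace ℝ E]

theorem Function.Periodic.fderiv {f : F → E} {c : F} (h : Periodic f c) :
    Periodic (fderiv ℝ f) c := fun x => by
  rw [← fderiv_comp_add_right, h.funext]

theorem fderiv_fderiv_apply_apply {u : F → E} {x : F} (hu : DifferentiableAt ℝ (fderiv ℝ u) x)
    (v e : F) : fderiv ℝ (fun t => fderiv ℝ u t v) x e = fderiv ℝ (fderiv ℝ u) x e v := by
  rw [fderiv_clm_apply hu (differentiableAt_const v)]
  simp

end Calculus

section Symplectic

variable {n : ℕ}

theorem rinner_add_right (x y z : EuclideanSpace ℂ (Fin n)) :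
    rinner x (y + z) = rinner x y + rinner x z := by
  simp [rinner]

theorem rinner_Jc_eq_im (x y : EuclideanSpace ℂ (Fin n)) :
    rinner (Jc x) y = (inner ℂ x y).im := by
  simp [rinner, Jc]

theorem rinner_Jc_self (x : EuclideanSpace ℂ (Fin n)) : rinner (Jc x) x = 0 := by
  rw [rinner_Jc_eq_im]
  exact inner_self_im (𝕜 := ℂ) x

theorem rinner_Jc_comm (x y : EuclideanSpace ℂ (Fin n)) : rinner (Jc y) x = -rinner (Jc x) y := by
  rw [rinner_Jc_eq_im, rinner_Jc_eq_im]
  exact inner_im_symm (𝕜 := ℂ) y x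

variable {F : Type*} [NormedAddCommGroup F] [NormedSpace ℝ F]

theorem DifferentiableAt.rinner_Jc {f g : F → EuclideanSpace ℂ (Fin n)} {x : F}
    (hf : DifferentiableAt ℝ f x) (hg : DifferentiableAt ℝ g x) :
    DifferentiableAt ℝ (fun t => rinner (Jc (f t)) (g t)) x :=
  reCLM.differentiableAt.comp x ((hf.const_smul I).inner ℂ hg)

theorem fderiv_rinner_Jc_apply {f g : F → EuclideanSpace ℂ (Fin n)} {x : F}
    (hf : DifferentiableAt ℝ f x) (hg : DifferentiableAt ℝ g x) (y : F) :
    fderiv ℝ (fun t => rinner (Jc (f t)) (g t)) x y =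
      rinner (Jc (fderiv ℝ f x y)) (g x) + rinner (Jc (f x)) (fderiv ℝ g x y) := by
  have h : HasFDerivAt (fun t => rinner (Jc (f t)) (g t)) _ x :=
    reCLM.hasFDerivAt.comp x ((hf.hasFDerivAt.const_smul I).inner ℂ hg.hasFDerivAt)
  rw [h.fderiv]
  simp only [ContinuousLinearMap.comp_apply, ContinuousLinearMap.prod_apply,
    fderivInnerCLM_apply, _root_.smul_apply, Pi.smul_apply, reCLM_apply]
  exact add_comm _ _

theorem fderiv_rinner_Jc_fderiv_apply {u : F → EuclideanSpace ℂ (Fin n)} (hu : ContDiff ℝ 2 u)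
    (x v e : F) :
    fderiv ℝ (fun t => rinner (Jc (u t)) (fderiv ℝ u t v)) x e =
      rinner (Jc (fderiv ℝ u x e)) (fderiv ℝ u x v) +
        rinner (Jc (u x)) (fderiv ℝ (fderiv ℝ u) x e v) := by
  have hD : DifferentiableAt ℝ (fderiv ℝ u) x :=
    ((hu.fderiv_right (m := 1) le_rfl).differentiable one_ne_zero) x
  rw [fderiv_rinner_Jc_apply ((hu.differentiable two_ne_zero) x)
    (hD.clm_apply (differentiableAt_const v)), fderiv_fderiv_apply_apply hD]

end Symplectic

section LiouvilleCoeff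

variable {n : ℕ} {u : ℂ → EuclideanSpace ℂ (Fin n)}

noncomputable def liouvilleCoeff (u : ℂ → EuclideanSpace ℂ (Fin n)) (w : ℂ) : ℂ :=
  (rinner (Jc (u w)) (pd1 u w) : ℂ) - rinner (Jc (u w)) (pd2 u w) * I

theorem liouvilleCoeff_eq_zero_iff {w : ℂ} :
    liouvilleCoeff u w = 0 ↔
      rinner (Jc (u w)) (pd1 u w) = 0 ∧ rinner (Jc (u w)) (pd2 u w) = 0 := by
  simp [liouvilleCoeff, Complex.ext_iff]

theorem Function.Periodic.liouvilleCoeff {c : ℂ} (h : Periodic u c) :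
    Periodic (liouvilleCoeff u) c := fun w => by
  simp only [_root_.liouvilleCoeff, pd1, pd2, h w, h.fderiv w]

theorem differentiable_liouvilleCoeff (hu : ContDiff ℝ 2 u)
    (hiso : ∀ w : ℂ, rinner (Jc (pd1 u w)) (pd2 u w) = 0)
    (hHS : ∀ w : ℂ, rinner (Jc (u w)) (pd1 (pd1 u) w + pd2 (pd2 u) w) = 0) :
    Differentiable ℂ (liouvilleCoeff u) := fun w => by
  have hu₁ : Differentiable ℝ u := hu.differentiable two_ne_zero
  have hD : Differentiable ℝ (fderiv ℝ u) :=
    (hu.fderiv_right (m := 1) le_rfl).differentiable one_ne_zero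
  have hsymm : fderiv ℝ (fderiv ℝ u) w I 1 = fderiv ℝ (fderiv ℝ u) w 1 I :=
    hu.contDiffAt.isSymmSndFDerivAt (by simp) I 1
  have hα := fderiv_rinner_Jc_fderiv_apply hu w 1
  have hβ := fderiv_rinner_Jc_fderiv_apply hu w I
  apply differentiableAt_complex_of_cauchyRiemann
  · exact (hu₁ w).rinner_Jc ((hD w).clm_apply (differentiableAt_const _))
  · exact (hu₁ w).rinner_Jc ((hD w).clm_apply (differentiableAt_const _))
  · have hΔ : rinner (Jc (u w)) (fderiv ℝ (fun t => fderiv ℝ u t 1) w 1 +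
        fderiv ℝ (fun t => fderiv ℝ u t I) w I) = 0 := hHS w
    rw [fderiv_fderiv_apply_apply (hD w), fderiv_fderiv_apply_apply (hD w),
      rinner_add_right] at hΔ
    simp only [pd1, pd2]
    rw [hα, hβ, rinner_Jc_self, rinner_Jc_self]
    linarith
  · have hiso_w : rinner (Jc (fderiv ℝ u w 1)) (fderiv ℝ u w I) = 0 := hiso w
    simp only [pd1, pd2]
    rw [hα, hβ, rinner_Jc_comm, hsymm, hiso_w]
    ring

end LiouvilleCoeff

theorem torus_dichotomy_general (n : ℕ)
    (u : ℂ → EuclideanSpace ℂ (Fin n))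
    (hu : ContDiff ℝ 2 u)
    (ω₁ ω₂ : ℂ) (hind : LinearIndependent ℝ ![ω₁, ω₂])
    (hper₁ : ∀ w : ℂ, u (w + ω₁) = u w)
    (hper₂ : ∀ w : ℂ, u (w + ω₂) = u w)
    (hiso : ∀ w : ℂ, rinner (Jc (pd1 u w)) (pd2 u w) = 0)
    (hHS : ∀ w : ℂ, rinner (Jc (u w)) (pd1 (pd1 u) w + pd2 (pd2 u) w) = 0) :
    (∀ w : ℂ, rinner (Jc (u w)) (pd1 u w) = 0 ∧ rinner (Jc (u w)) (pd2 u w) = 0)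
    ∨ (∀ w : ℂ, ¬(rinner (Jc (u w)) (pd1 u w) = 0 ∧ rinner (Jc (u w)) (pd2 u w) = 0)) := by
  have hconst : ∀ w, liouvilleCoeff u w = liouvilleCoeff u 0 := fun w =>
    (differentiable_liouvilleCoeff hu hiso hHS).apply_eq_apply_of_periodic hind
      (Periodic.liouvilleCoeff hper₁) (Periodic.liouvilleCoeff hper₂) w 0
  simp only [← liouvilleCoeff_eq_zero_iff, hconst]
  exact (em _).imp (fun h _ => h) (fun h _ => h)

/-- A doubly periodic `C²` isotropic map `u : ℂ → ℂⁿ` whose cone is Hamiltonian stationary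
is either everywhere Legendrian or has no Legendrian points at all (the genus-one case:
`2g - 2 = 0` Legendrian points). -/
theorem torus_dichotomy (n : ℕ) (hn : 1 ≤ n)
    (u : ℂ → EuclideanSpace ℂ (Fin n))
    (hu : ContDiff ℝ 2 u)
    (ω₁ ω₂ : ℂ) (hind : LinearIndependent ℝ ![ω₁, ω₂])
    (hper₁ : ∀ w : ℂ, u (w + ω₁) = u w)
    (hper₂ : ∀ w : ℂ, u (w + ω₂) = u w)
    (hiso : ∀ w : ℂ, rinner (Jc (pd1 u w)) (pd2 u w) = 0)
    (hHS : ∀ w : ℂ, rinner (Jc (u w)) (pd1 (pd1 u) w + pd2 (pd2 u) w) = 0) :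
    (∀ w : ℂ, rinner (Jc (u w)) (pd1 u w) = 0 ∧ rinner (Jc (u w)) (pd2 u w) = 0)
    ∨ (∀ w : ℂ, ¬(rinner (Jc (u w)) (pd1 u w) = 0 ∧ rinner (Jc (u w)) (pd2 u w) = 0)) :=
  torus_dichotomy_general n u hu ω₁ ω₂ hind hper₁ hper₂ hiso hHS
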